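/- The map $\varphi(z) = \frac{1}{2}\sqrt{1 - e^{-2\pi i z}}$ (with the branch of square root having positive imaginary part) is a conformal bijection from the slit-strip $\mathbb{S}_{slit} = \{z : -1/2 < \mathrm{Re} z < 1/2\} \setminus \{iy : y \le 0\}$ onto the upper half-plane $\mathbb{H} = \{w : \mathrm{Im}\, w > 0\}$. -/

import Mathlib

/-!
The exponential `z ↦ exp (-2πiz)` maps the slit-strip bijectively onto `ℂ ∖ (-∞, 1]`: the strip
has width one, so the exponential is injective on it, and the slit `{iy : y ≤ 0}` is exactly
the preimage of `(0, 1]`. The map `w ↦ 1 - 4w²` also maps the upper half-plane bijectively onto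
`ℂ ∖ (-∞, 1]`, since `w ↦ w²` identifies it with `ℂ ∖ [0, ∞)`. Hence `φ`, being determined by
`(2φ)² = 1 - exp (-2πiz)` and `Im φ > 0`, is `exp (-2πi ·)` followed by the inverse of
`w ↦ 1 - 4w²`. It is holomorphic because it agrees with `(i/2)·√(exp (-2πiz) - 1)` for the
principal square root.
-/

open Complex Real

def slitStrip : Set ℂ :=
  {z : ℂ | -(1:ℝ)/2 < z.re ∧ z.re < 1/2 ∧ ¬ (z.re = 0 ∧ z.im ≤ 0)}

lemma eq_of_sq_eq_sq_of_im_pos {a b : ℂ} (h : a ^ 2 = b ^ 2) (ha : 0 < a.im) (hb : 0 < b.im) :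
    a = b := by
  refine (sq_eq_sq_iff_eq_or_eq_neg.mp h).resolve_right fun hab => ?_
  have := congrArg im hab
  rw [neg_im] at this
  linarith

lemma re_cpow_inv_two_pos {u : ℂ} (hu : u ∈ slitPlane) : 0 < (u ^ (2⁻¹ : ℂ)).re := by
  rw [cpow_def_of_ne_zero (slitPlane_ne_zero hu), exp_re]
  refine mul_pos (Real.exp_pos _) (Real.cos_pos_of_mem_Ioo ⟨?_, ?_⟩)
  all_goals simp [log_im]
  · linarith [neg_pi_lt_arg u]
  · linarith [(arg_le_pi u).lt_of_ne (slitPlane_arg_ne_pi hu)]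

lemma neg_sq_mem_slitPlane {w : ℂ} (hw : w.im ≠ 0) : -w ^ 2 ∈ slitPlane := by
  have hre : (-w ^ 2).re = w.im ^ 2 - w.re ^ 2 := by simp [sq]
  have him : (-w ^ 2).im = -(2 * w.re * w.im) := by simp [sq]; ring
  rw [mem_slitPlane_iff, hre, him]
  by_cases h : w.re = 0
  · exact .inl (by simpa [h] using sq_pos_of_ne_zero hw)
  · exact .inr (by simp [h, hw])

lemma injOn_exp_neg_two_pi_I_mul :
    Set.InjOn (fun z => exp (-2 * π * I * z)) (re ⁻¹' Set.Ioo (-1/2) (1/2)) := by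
  intro z₁ h₁ z₂ h₂ h
  obtain ⟨n, hn⟩ := exp_eq_exp_iff_exists_int.mp h
  have hz : z₁ = z₂ - n := by
    have hc : (-2 * π * I : ℂ) ≠ 0 := by simp [Real.pi_ne_zero]
    apply mul_left_cancel₀ hc
    linear_combination hn
  have hn : n = 0 := by
    have hre := congrArg re hz
    simp only [sub_re, intCast_re, Set.mem_preimage, Set.mem_Ioo] at hre h₁ h₂
    have h1 : (-1 : ℝ) < n := by linarith
    have h2 : (n : ℝ) < 1 := by linarith
    norm_cast at h1 h2
    omega
  simpa [hn] using hz

lemma exp_neg_two_pi_I_mul_sub_one_mem_slitPlane {z : ℂ} (hz : z ∈ slitStrip) :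
    exp (-2 * π * I * z) - 1 ∈ slitPlane := by
  obtain ⟨h₁, h₂, hslit⟩ := hz
  rw [mem_slitPlane_iff]
  by_cases hre : z.re = 0
  · left
    have him : 0 < z.im := lt_of_not_ge fun h => hslit ⟨hre, h⟩
    simp [exp_re, hre, him, Real.pi_pos]
  · right
    have hsin : Real.sin (2 * π * z.re) ≠ 0 := by
      rw [ne_eq, Real.sin_eq_zero_iff_of_lt_of_lt (by nlinarith [Real.pi_pos])
        (by nlinarith [Real.pi_pos])]
      simpa [Real.pi_ne_zero] using hre
    simp [exp_im, Real.exp_ne_zero, hsin]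

lemma exists_mem_slitStrip_exp_eq {u : ℂ} (hu : u - 1 ∈ slitPlane) :
    ∃ z ∈ slitStrip, exp (-2 * π * I * z) = u := by
  have hu' : u ∈ slitPlane := by
    rw [mem_slitPlane_iff] at hu ⊢
    simp only [sub_re, one_re, sub_im, one_im, sub_zero] at hu
    rcases hu with h | h
    · exact .inl (by linarith)
    · exact .inr h
  have h2π : (2 * π : ℂ) = ((2 * π : ℝ) : ℂ) := by push_cast; ring
  have hre : (I * log u / (2 * π)).re = -u.arg / (2 * π) := by
    rw [h2π, div_ofReal_re]
    simp [log_im]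
  have him : (I * log u / (2 * π)).im = Real.log ‖u‖ / (2 * π) := by
    rw [h2π, div_ofReal_im]
    simp [log_re]
  refine ⟨I * log u / (2 * π), ⟨?_, ?_, ?_⟩, ?_⟩
  · rw [hre, lt_div_iff₀ Real.two_pi_pos]
    linarith [(arg_le_pi u).lt_of_ne (slitPlane_arg_ne_pi hu')]
  · rw [hre, div_lt_iff₀ Real.two_pi_pos]
    linarith [neg_pi_lt_arg u]
  · rintro ⟨hre0, him0⟩
    have harg : u.arg = 0 := by
      rw [hre, div_eq_zero_iff] at hre0
      simpa [Real.pi_ne_zero] using hre0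
    have hreal := (arg_eq_zero_iff.mp harg).2
    have hgt : 1 < u.re := by simpa [mem_slitPlane_iff, hreal] using hu
    have hlog : 0 < Real.log ‖u‖ := Real.log_pos (hgt.trans_le (re_le_norm u))
    rw [him] at him0
    linarith [div_pos hlog Real.two_pi_pos]
  · have hlog : -2 * π * I * (I * log u / (2 * π)) = log u := by
      field_simp
      ring_nf
      simp
    rw [hlog, exp_log (slitPlane_ne_zero hu')]

lemma eq_I_mul_cpow_inv_two_of_sq_eq_neg {w u : ℂ} (hu : u ∈ slitPlane) (hw : w ^ 2 = -u)
    (him : 0 < w.im) : w = I * u ^ (2⁻¹ : ℂ) := by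
  refine eq_of_sq_eq_sq_of_im_pos ?_ him (by simpa using re_cpow_inv_two_pos hu)
  rw [hw, mul_pow, I_sq, cpow_ofNat_inv_pow]
  ring

theorem slitStrip_conformal_map_general (φ : ℂ → ℂ)
    (hsq : ∀ z ∈ slitStrip,
      (2 * φ z)^2 = 1 - Complex.exp (-2 * (Real.pi : ℂ) * Complex.I * z))
    (him : ∀ z ∈ slitStrip, 0 < (φ z).im) :
    DifferentiableOn ℂ φ slitStrip ∧
      Set.BijOn φ slitStrip {w : ℂ | 0 < w.im} := by
  have hφ : ∀ z ∈ slitStrip, φ z = I * (exp (-2 * π * I * z) - 1) ^ (2⁻¹ : ℂ) / 2 := by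
    intro z hz
    rw [eq_div_iff two_ne_zero, mul_comm]
    refine eq_I_mul_cpow_inv_two_of_sq_eq_neg
      (exp_neg_two_pi_I_mul_sub_one_mem_slitPlane hz) ?_ (by simpa using him z hz)
    rw [hsq z hz]
    ring
  refine ⟨DifferentiableOn.congr (fun z hz => ?_) hφ, fun z hz => him z hz, ?_, ?_⟩
  · exact ((((differentiableAt_id.const_mul _).cexp.sub_const 1).cpow (differentiableAt_const _)
      (exp_neg_two_pi_I_mul_sub_one_mem_slitPlane hz)).const_mul I).div_const 2
      |>.differentiableWithinAt
  · intro z₁ h₁ z₂ h₂ h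
    refine injOn_exp_neg_two_pi_I_mul ⟨h₁.1, h₁.2.1⟩ ⟨h₂.1, h₂.2.1⟩ ?_
    have h_eq := hsq z₂ h₂
    rw [← h, hsq z₁ h₁] at h_eq
    exact sub_right_injective h_eq
  · intro w hw
    have hw' : 0 < (2 * w).im := by simpa using hw
    obtain ⟨z, hz, hexp⟩ := exists_mem_slitStrip_exp_eq (u := 1 - (2 * w) ^ 2)
      (by simpa using neg_sq_mem_slitPlane hw'.ne')
    have hsq' : (2 * φ z) ^ 2 = (2 * w) ^ 2 := by rw [hsq z hz, hexp]; ring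
    exact ⟨z, hz, mul_left_cancel₀ two_ne_zero
      (eq_of_sq_eq_sq_of_im_pos hsq' (by simpa using him z hz) hw')⟩

/-- The map `φ(z) = ½√(1-e^{-2πiz})`, with the branch of the square root having
positive imaginary part, is a conformal (holomorphic) bijection from the
slit-strip onto the upper half-plane. -/
theorem slitStrip_conformal_map (φ : ℂ → ℂ)
    (hcont : ContinuousOn φ slitStrip)
    (hsq : ∀ z ∈ slitStrip,
      (2 * φ z)^2 = 1 - Complex.exp (-2 * (Real.pi : ℂ) * Complex.I * z))
    (him : ∀ z ∈ slitStrip, 0 < (φ z).im) :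
    DifferentiableOn ℂ φ slitStrip ∧
      Set.BijOn φ slitStrip {w : ℂ | 0 < w.im} :=
  slitStrip_conformal_map_general φ hsq him
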